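/- For an invertible bounded operator S on a complex Hilbert space and bounded operators X, Y, the block-diagonal operator (S Y S⁻¹ + S*⁻¹ Y S*) ⊕ (S* X S*⁻¹ + S⁻¹ X S) on H ⊕ H has operator norm at least 2‖X ⊕ Y‖; equivalently, max{‖S Y S⁻¹ + S*⁻¹ Y S*‖, ‖S* X S*⁻¹ + S⁻¹ X S‖} ≥ 2 max{‖X‖, ‖Y‖}. -/

import Mathlib

open ContinuousLinearMap

variable {H : Type*} [NormedAddCommGroup H] [InnerProductSpace ℂ H] [CompleteSpace H]

/-- The block-diagonal operator `A ⊕ B` acting on the Hilbert space `H ⊕ H`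
(realized as `WithLp 2 (H × H)`). -/
noncomputable def directSum (A B : H →L[ℂ] H) :
    WithLp 2 (H × H) →L[ℂ] WithLp 2 (H × H) :=
  ((WithLp.prodContinuousLinearEquiv 2 ℂ H H).symm : (H × H) →L[ℂ] WithLp 2 (H × H)) ∘L
    (A.prodMap B) ∘L
      ((WithLp.prodContinuousLinearEquiv 2 ℂ H H) : WithLp 2 (H × H) →L[ℂ] (H × H))

/-!
Let `T` be a left inverse of `S`, `B = S X T + T† X S†` and `E t = exp (-t S†S)`. Since
`S† B S = S†S X + X S†S`, differentiating `t ↦ ⟪X (E t x), E t y⟫` gives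
`⟪X x, y⟫ = ⟪X (E A x), E A y⟫ + ∫₀^A ⟪B (S (E t x)), S (E t y)⟫ dt`.
By Cauchy–Schwarz and AM–GM the integral is at most `‖B‖ / 2` for unit vectors, because
`∫₀^A ‖S (E t x)‖² dt = (‖x‖² - ‖E A x‖²) / 2`. The same identity, with `S` bounded below and
`‖E t x‖` decreasing, gives `‖E A x‖² = O(1 / A)`; letting `A → ∞` yields `2 ‖X‖ ≤ ‖B‖`.
The theorem applies this to `(S, S⁻¹, Y)` and `(S†, (S⁻¹)†, X)`.
-/

open NormedSpace
open scoped InnerProductSpace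

theorem norm_directSum (A B : H →L[ℂ] H) : ‖directSum A B‖ = max ‖A‖ ‖B‖ := by
  refine le_antisymm (opNorm_le_bound _ (by positivity) fun v => ?_) (max_le ?_ ?_)
  · have hA : ‖A v.fst‖ ≤ max ‖A‖ ‖B‖ * ‖v.fst‖ :=
      A.le_of_opNorm_le (le_max_left _ _) _
    have hB : ‖B v.snd‖ ≤ max ‖A‖ ‖B‖ * ‖v.snd‖ :=
      B.le_of_opNorm_le (le_max_right _ _) _
    change ‖WithLp.toLp 2 (A v.fst, B v.snd)‖ ≤ _
    rw [← pow_le_pow_iff_left₀ (norm_nonneg _) (by positivity) two_ne_zero,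
      WithLp.prod_norm_sq_eq_of_L2, mul_pow, WithLp.prod_norm_sq_eq_of_L2 v, mul_add, ← mul_pow,
      ← mul_pow]
    gcongr <;> assumption
  · refine opNorm_le_bound _ (norm_nonneg _) fun x => ?_
    simpa [directSum] using (directSum A B).le_opNorm (WithLp.toLp 2 (x, 0))
  · refine opNorm_le_bound _ (norm_nonneg _) fun x => ?_
    simpa [directSum] using (directSum A B).le_opNorm (WithLp.toLp 2 (0, x))

theorem opNorm_le_of_unit_norm_inner {𝕜 E F : Type*} [RCLike 𝕜] [NormedAddCommGroup E]
    [NormedSpace 𝕜 E] [NormedAddCommGroup F] [InnerProductSpace 𝕜 F] {X : E →L[𝕜] F} {C : ℝ}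
    (hC : 0 ≤ C) (h : ∀ x y, ‖x‖ = 1 → ‖y‖ = 1 → ‖⟪X x, y⟫_𝕜‖ ≤ C) : ‖X‖ ≤ C :=
  opNorm_le_of_unit_norm hC fun x hx => by
    rw [← innerSL_apply_norm 𝕜]
    exact opNorm_le_of_unit_norm hC fun y hy => h x y hx hy

section gramSemigroup

variable (S : H →L[ℂ] H)

noncomputable def gramSemigroup (t : ℝ) : H →L[ℂ] H := exp (t • -(adjoint S * S))

theorem gramSemigroup_zero : gramSemigroup S 0 = 1 := by
  simp [gramSemigroup]

theorem hasDerivAt_gramSemigroup_apply (x : H) (t : ℝ) :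
    HasDerivAt (fun u => gramSemigroup S u x) (-adjoint S (S (gramSemigroup S t x))) t := by
  have h := ((ContinuousLinearMap.apply ℂ H x).restrictScalars ℝ).hasFDerivAt.comp_hasDerivAt t
    (hasDerivAt_exp_smul_const' (𝕂 := ℝ) (-(adjoint S * S)) t)
  simpa [gramSemigroup, Function.comp_def] using h

theorem continuous_gramSemigroup_apply (x : H) : Continuous fun t => gramSemigroup S t x :=
  continuous_iff_continuousAt.2 fun t => (hasDerivAt_gramSemigroup_apply S x t).continuousAt

theorem hasDerivAt_norm_sq_gramSemigroup_apply (x : H) (t : ℝ) :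
    HasDerivAt (fun u => ‖gramSemigroup S u x‖ ^ 2) (-(2 * ‖S (gramSemigroup S t x)‖ ^ 2)) t := by
  let := InnerProductSpace.rclikeToReal ℂ H
  convert (hasDerivAt_gramSemigroup_apply S x t).norm_sq using 1
  rw [real_inner_eq_re_inner ℂ, inner_neg_right, adjoint_inner_right, inner_self_eq_norm_sq_to_K]
  simp [← Complex.ofReal_pow]

theorem hasDerivAt_inner_gramSemigroup_apply (X : H →L[ℂ] H) (x y : H) (t : ℝ) :
    HasDerivAt (fun u => ⟪X (gramSemigroup S u x), gramSemigroup S u y⟫_ℂ)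
      (-(⟪S (X (gramSemigroup S t x)), S (gramSemigroup S t y)⟫_ℂ +
        ⟪X (adjoint S (S (gramSemigroup S t x))), gramSemigroup S t y⟫_ℂ)) t := by
  refine (((X.restrictScalars ℝ).hasFDerivAt.comp_hasDerivAt t
    (hasDerivAt_gramSemigroup_apply S x t)).inner ℂ
      (hasDerivAt_gramSemigroup_apply S y t)).congr_deriv ?_
  simp only [Function.comp_apply, coe_restrictScalars', map_neg, inner_neg_left, inner_neg_right,
    adjoint_inner_right]
  ring

theorem antitone_norm_sq_gramSemigroup_apply (x : H) :
    Antitone fun t => ‖gramSemigroup S t x‖ ^ 2 :=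
  antitone_of_hasDerivAt_nonpos (fun t => hasDerivAt_norm_sq_gramSemigroup_apply S x t)
    fun t => neg_nonpos.2 (by positivity)

theorem integral_norm_sq_gramSemigroup_apply (x : H) (A : ℝ) :
    ∫ t in (0 : ℝ)..A, ‖S (gramSemigroup S t x)‖ ^ 2 =
      (‖x‖ ^ 2 - ‖gramSemigroup S A x‖ ^ 2) / 2 := by
  have hcont : Continuous fun t => ‖S (gramSemigroup S t x)‖ ^ 2 :=
    ((S.continuous.comp (continuous_gramSemigroup_apply S x)).norm.pow 2)
  have h := intervalIntegral.integral_eq_sub_of_hasDerivAt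
    (fun t _ => hasDerivAt_norm_sq_gramSemigroup_apply S x t)
    ((continuous_const.mul hcont).neg.intervalIntegrable 0 A)
  rw [intervalIntegral.integral_neg, intervalIntegral.integral_const_mul, gramSemigroup_zero,
    one_apply_eq_self] at h
  linarith

theorem norm_integral_inner_gramSemigroup_le (B : H →L[ℂ] H) (x y : H) {A : ℝ} (hA : 0 ≤ A) :
    ‖∫ t in (0 : ℝ)..A, ⟪B (S (gramSemigroup S t x)), S (gramSemigroup S t y)⟫_ℂ‖ ≤
      ‖B‖ * (‖x‖ ^ 2 + ‖y‖ ^ 2) / 4 := by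
  have hcont (z : H) : Continuous fun t => ‖S (gramSemigroup S t z)‖ ^ 2 :=
    (S.continuous.comp (continuous_gramSemigroup_apply S z)).norm.pow 2
  have hpointwise (a b : H) : ‖⟪B a, b⟫_ℂ‖ ≤ ‖B‖ / 2 * (‖a‖ ^ 2 + ‖b‖ ^ 2) := by
    have hCS := (norm_inner_le_norm (𝕜 := ℂ) (B a) b).trans
      (mul_le_mul_of_nonneg_right (B.le_opNorm a) (norm_nonneg b))
    nlinarith [mul_nonneg (norm_nonneg B) (sq_nonneg (‖a‖ - ‖b‖))]
  calc _ ≤ ∫ t in (0 : ℝ)..A, ‖B‖ / 2 *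
          (‖S (gramSemigroup S t x)‖ ^ 2 + ‖S (gramSemigroup S t y)‖ ^ 2) :=
        intervalIntegral.norm_integral_le_of_norm_le hA
          (MeasureTheory.ae_of_all _ fun t _ => hpointwise _ _)
          ((continuous_const.mul ((hcont x).add (hcont y))).intervalIntegrable 0 A)
    _ = ‖B‖ / 2 * ((‖x‖ ^ 2 - ‖gramSemigroup S A x‖ ^ 2) / 2 +
          (‖y‖ ^ 2 - ‖gramSemigroup S A y‖ ^ 2) / 2) := by
        rw [intervalIntegral.integral_const_mul, intervalIntegral.integral_add
          ((hcont x).intervalIntegrable 0 A) ((hcont y).intervalIntegrable 0 A),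
          integral_norm_sq_gramSemigroup_apply, integral_norm_sq_gramSemigroup_apply]
    _ ≤ ‖B‖ * (‖x‖ ^ 2 + ‖y‖ ^ 2) / 4 := by
        nlinarith [mul_nonneg (norm_nonneg B) (sq_nonneg ‖gramSemigroup S A x‖),
          mul_nonneg (norm_nonneg B) (sq_nonneg ‖gramSemigroup S A y‖)]

theorem two_mul_mul_norm_sq_gramSemigroup_le {C : ℝ} (hS : ∀ v, ‖v‖ ≤ C * ‖S v‖) (x : H)
    {A : ℝ} (hA : 0 ≤ A) : 2 * A * ‖gramSemigroup S A x‖ ^ 2 ≤ C ^ 2 * ‖x‖ ^ 2 := by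
  have hcont : Continuous fun t => ‖gramSemigroup S t x‖ ^ 2 :=
    (continuous_gramSemigroup_apply S x).norm.pow 2
  have hScont : Continuous fun t => ‖S (gramSemigroup S t x)‖ ^ 2 :=
    (S.continuous.comp (continuous_gramSemigroup_apply S x)).norm.pow 2
  have hS2 (v : H) : ‖v‖ ^ 2 ≤ C ^ 2 * ‖S v‖ ^ 2 := by
    rw [← mul_pow]; exact pow_le_pow_left₀ (norm_nonneg v) (hS v) 2
  have hmono : A * ‖gramSemigroup S A x‖ ^ 2 ≤ ∫ t in (0 : ℝ)..A, ‖gramSemigroup S t x‖ ^ 2 := by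
    simpa using intervalIntegral.integral_mono_on hA
      (intervalIntegrable_const (μ := MeasureTheory.volume)) (hcont.intervalIntegrable 0 A)
      fun t ht => antitone_norm_sq_gramSemigroup_apply S x ht.2
  have hlower : ∫ t in (0 : ℝ)..A, ‖gramSemigroup S t x‖ ^ 2 ≤
      C ^ 2 * ((‖x‖ ^ 2 - ‖gramSemigroup S A x‖ ^ 2) / 2) := by
    rw [← integral_norm_sq_gramSemigroup_apply, ← intervalIntegral.integral_const_mul]
    exact intervalIntegral.integral_mono_on hA (hcont.intervalIntegrable 0 A)
      ((continuous_const.mul hScont).intervalIntegrable 0 A) fun t _ => hS2 _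
  nlinarith [mul_nonneg (sq_nonneg C) (sq_nonneg ‖gramSemigroup S A x‖)]

end gramSemigroup

section conjugation

variable {S T : H →L[ℂ] H}

theorem inner_conj_add_adjoint_conj_apply (hTS : T * S = 1) (X : H →L[ℂ] H) (v w : H) :
    ⟪(S * X * T + adjoint T * X * adjoint S) (S v), S w⟫_ℂ =
      ⟪S (X v), S w⟫_ℂ + ⟪X (adjoint S (S v)), w⟫_ℂ := by
  have hT (u : H) : T (S u) = u := by simpa using DFunLike.congr_fun hTS u
  simp only [add_apply, mul_apply_eq_comp, hT, inner_add_left, adjoint_inner_left]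

theorem inner_eq_inner_gramSemigroup_add_integral (hTS : T * S = 1) (X : H →L[ℂ] H) (x y : H)
    (A : ℝ) :
    ⟪X x, y⟫_ℂ = ⟪X (gramSemigroup S A x), gramSemigroup S A y⟫_ℂ +
      ∫ t in (0 : ℝ)..A, ⟪(S * X * T + adjoint T * X * adjoint S) (S (gramSemigroup S t x)),
        S (gramSemigroup S t y)⟫_ℂ := by
  set B := S * X * T + adjoint T * X * adjoint S
  have hcont : Continuous fun t => ⟪B (S (gramSemigroup S t x)), S (gramSemigroup S t y)⟫_ℂ :=
    ((B.continuous.comp (S.continuous.comp (continuous_gramSemigroup_apply S x))).inner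
      (S.continuous.comp (continuous_gramSemigroup_apply S y)))
  have h := intervalIntegral.integral_eq_sub_of_hasDerivAt
    (fun t _ => (hasDerivAt_inner_gramSemigroup_apply S X x y t).congr_deriv
      (congrArg Neg.neg (inner_conj_add_adjoint_conj_apply hTS X _ _).symm))
    (hcont.neg.intervalIntegrable 0 A)
  rw [intervalIntegral.integral_neg, gramSemigroup_zero, one_apply_eq_self, one_apply_eq_self] at h
  linear_combination h

end conjugation

open Filter Topology in
theorem two_mul_norm_le_norm_conj_add_adjoint_conj {S T : H →L[ℂ] H} (hTS : T * S = 1)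
    (X : H →L[ℂ] H) : 2 * ‖X‖ ≤ ‖S * X * T + adjoint T * X * adjoint S‖ := by
  set B := S * X * T + adjoint T * X * adjoint S
  have hS (v : H) : ‖v‖ ≤ ‖T‖ * ‖S v‖ := by
    simpa [← mul_apply_eq_comp, hTS] using T.le_opNorm (S v)
  have hbound : ∀ A > 0, ‖X‖ ≤ ‖B‖ / 2 + ‖X‖ * (‖T‖ ^ 2 / (2 * A)) := by
    intro A hA
    refine opNorm_le_of_unit_norm_inner (by positivity) fun x y hx hy => ?_
    set a := ‖gramSemigroup S A x‖
    set b := ‖gramSemigroup S A y‖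
    have hab : a * b ≤ ‖T‖ ^ 2 / (2 * A) := by
      have ha := two_mul_mul_norm_sq_gramSemigroup_le S hS x hA.le
      have hb := two_mul_mul_norm_sq_gramSemigroup_le S hS y hA.le
      rw [hx, one_pow, mul_one] at ha
      rw [hy, one_pow, mul_one] at hb
      rw [le_div_iff₀ (by positivity)]
      nlinarith [mul_nonneg hA.le (sq_nonneg (a - b))]
    calc ‖⟪X x, y⟫_ℂ‖
        = ‖⟪X (gramSemigroup S A x), gramSemigroup S A y⟫_ℂ + ∫ t in (0 : ℝ)..A,
            ⟪B (S (gramSemigroup S t x)), S (gramSemigroup S t y)⟫_ℂ‖ := by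
          rw [← inner_eq_inner_gramSemigroup_add_integral hTS]
      _ ≤ ‖X‖ * a * b + ‖B‖ * (‖x‖ ^ 2 + ‖y‖ ^ 2) / 4 :=
          norm_add_le_of_le ((norm_inner_le_norm (𝕜 := ℂ) _ _).trans
            (mul_le_mul_of_nonneg_right (X.le_opNorm _) (norm_nonneg _)))
            (norm_integral_inner_gramSemigroup_le S B x y hA.le)
      _ ≤ ‖B‖ / 2 + ‖X‖ * (‖T‖ ^ 2 / (2 * A)) := by
          rw [hx, hy, mul_assoc]
          linarith [mul_le_mul_of_nonneg_left hab (norm_nonneg X)]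
  have hlim : Tendsto (fun A : ℝ => ‖B‖ / 2 + ‖X‖ * (‖T‖ ^ 2 / (2 * A))) atTop (𝓝 (‖B‖ / 2)) := by
    simpa using tendsto_const_nhds.add (tendsto_const_nhds.mul
      (tendsto_const_nhds.div_atTop (tendsto_id.const_mul_atTop (two_pos : (0 : ℝ) < 2))))
  linarith [ge_of_tendsto hlim ((eventually_gt_atTop 0).mono hbound)]

theorem stmt14 (S : (H →L[ℂ] H)ˣ) (X Y : H →L[ℂ] H) :
    2 * ‖directSum X Y‖ ≤
      ‖directSum
        ((S : H →L[ℂ] H) * Y * (↑S⁻¹ : H →L[ℂ] H) +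
          adjoint (↑S⁻¹ : H →L[ℂ] H) * Y * adjoint (S : H →L[ℂ] H))
        (adjoint (S : H →L[ℂ] H) * X * adjoint (↑S⁻¹ : H →L[ℂ] H) +
          (↑S⁻¹ : H →L[ℂ] H) * X * (S : H →L[ℂ] H))‖ ∧
      2 * max ‖X‖ ‖Y‖ ≤ max
        ‖(S : H →L[ℂ] H) * Y * (↑S⁻¹ : H →L[ℂ] H) +
          adjoint (↑S⁻¹ : H →L[ℂ] H) * Y * adjoint (S : H →L[ℂ] H)‖
        ‖adjoint (S : H →L[ℂ] H) * X * adjoint (↑S⁻¹ : H →L[ℂ] H) +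
          (↑S⁻¹ : H →L[ℂ] H) * X * (S : H →L[ℂ] H)‖ := by
  have hY := two_mul_norm_le_norm_conj_add_adjoint_conj S.inv_mul Y
  have hX := two_mul_norm_le_norm_conj_add_adjoint_conj
    (S := adjoint (S : H →L[ℂ] H)) (T := adjoint (↑S⁻¹ : H →L[ℂ] H))
    (by rw [← star_eq_adjoint, ← star_eq_adjoint, ← star_mul, S.mul_inv, star_one]) X
  rw [adjoint_adjoint, adjoint_adjoint] at hX
  rw [norm_directSum, norm_directSum, and_self, mul_max_of_nonneg _ _ zero_le_two, max_comm]
  exact max_le_max hY hX
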